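/- For integers ℓ ≥ 1 and q ≥ 0, let W be a walk in the graph G_{ℓ,q} from s to t that visits every node of G_{ℓ,q} at least once. Then there do not exist two edges of the top path and two edges of the bottom path each of which is traversed by W at most once; equivalently, for the top path or for the bottom path, all but at most one of its ℓ edges are traversed by W at least twice. -/

import Mathlib

open Finset

namespace TSPGap


/-! ### Lovász–Schrijver lift-and-project operators -/

/-- `cone(R) = {(λ, λx) : λ ≥ 0, x ∈ R}`, with the extra 0th coordinate first. -/
def lsCone {ι : Type*} (R : Set (ι → ℝ)) : Set (ℝ × (ι → ℝ)) :=
  {p | ∃ c : ℝ, ∃ y ∈ R, 0 ≤ c ∧ p.1 = c ∧ p.2 = fun i => c * y i}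

/-- `X` is a protection matrix witnessing `x ∈ N(R)`: it is symmetric, its 0th row and
diagonal both equal `(1, x)`, and each row `X_i` and difference `X_0 - X_i` lies in `cone(R)`. -/
def IsProtection {ι : Type*} (R : Set (ι → ℝ)) (x : ι → ℝ)
    (X : Option ι → Option ι → ℝ) : Prop :=
  (∀ i j, X i j = X j i) ∧
  X none none = 1 ∧
  (∀ i, X none (some i) = x i) ∧
  (∀ i, X (some i) (some i) = x i) ∧
  (∀ i, (X (some i) none, fun j => X (some i) (some j)) ∈ lsCone R) ∧
  (∀ i, (X none none - X (some i) none,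
         fun j => X none (some j) - X (some i) (some j)) ∈ lsCone R)

/-- The Lovász–Schrijver `N` operator. -/
def lsN {ι : Type*} (R : Set (ι → ℝ)) : Set (ι → ℝ) :=
  {x | ∃ X : Option ι → Option ι → ℝ, IsProtection R x X}

/-- The Lovász–Schrijver `N₊` operator (protection matrix additionally PSD). -/
def lsNplus {ι : Type*} [Fintype ι] (R : Set (ι → ℝ)) : Set (ι → ℝ) :=
  {x | ∃ X : Matrix (Option ι) (Option ι) ℝ, X.PosSemidef ∧
        IsProtection R x (fun i j => X i j)}

/-! ### Directed graphs -/

variable {V : Type*} [DecidableEq V]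

/-- The list of (directed) steps of a walk given by its list of vertices. -/
def dSteps (l : List V) : List (V × V) := l.zip l.tail

/-- The steps of a closed walk given by its list of vertices. -/
def cycSteps (l : List V) : List (V × V) := l.zip (l.rotate 1)

/-- `l` is a directed walk from `u` to `v` using edges of `E`. -/
def IsDWalk (E : Finset (V × V)) (u v : V) (l : List V) : Prop :=
  l.head? = some u ∧ l.getLast? = some v ∧ ∀ a ∈ dSteps l, a ∈ E

/-- Total weight of a walk. -/
def dWalkWeight (w : V × V → ℝ) (l : List V) : ℝ := ((dSteps l).map w).sum

/-- Shortest-path distance from `u` to `v` in the weighted directed graph `(E, w)`. -/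
noncomputable def dDist (E : Finset (V × V)) (w : V × V → ℝ) (u v : V) : ℝ :=
  sInf {c | ∃ l : List V, IsDWalk E u v l ∧ dWalkWeight w l = c}

/-- `x(δ⁺(S))`. -/
def outCut (E : Finset (V × V)) (x : ↥E → ℝ) (S : Finset V) : ℝ :=
  ∑ e ∈ E.attach.filter (fun e => e.val.1 ∈ S ∧ e.val.2 ∉ S), x e

/-- `x(δ⁻(S))`. -/
def inCut (E : Finset (V × V)) (x : ↥E → ℝ) (S : Finset V) : ℝ :=
  ∑ e ∈ E.attach.filter (fun e => e.val.1 ∉ S ∧ e.val.2 ∈ S), x e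

/-- `d · x = ∑_e d_e x_e` over the edge set `E`. -/
def dDot (E : Finset (V × V)) (d : V × V → ℝ) (x : ↥E → ℝ) : ℝ :=
  ∑ e ∈ E.attach, d e.val * x e

/-- The balanced asymmetric tour polytope of the directed graph with node set `VS`
and edge set `E`. -/
def ATbal (VS : Finset V) (E : Finset (V × V)) : Set (↥E → ℝ) :=
  {x | (∀ e, 0 ≤ x e ∧ x e ≤ 1) ∧
       (∀ S : Finset V, S ⊆ VS → S.Nonempty → S ≠ VS →
          1 ≤ outCut E x S ∧ 1 ≤ inCut E x S) ∧
       (∀ v ∈ VS, outCut E x {v} = inCut E x {v})}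

/-- Indicator vectors of Hamiltonian cycles (on node set `VS`) among edges `E`. -/
def hamCycleVecs (VS : Finset V) (E : Finset (V × V)) : Set (↥E → ℝ) :=
  {x | ∃ c : List V, 2 ≤ c.length ∧ c.Nodup ∧ c.toFinset = VS ∧
        (∀ a ∈ cycSteps c, a ∈ E) ∧
        ∀ e : ↥E, x e = if e.val ∈ cycSteps c then 1 else 0}

/-- Edge set of the complete directed graph on the node set `VS` (no self-loops). -/
def dComplete (VS : Finset V) : Finset (V × V) := (VS ×ˢ VS).filter (fun e => e.1 ≠ e.2)

/-- Edge set of the complete directed graph on all of `V` (no self-loops). -/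
def dCompleteAll (V : Type*) [Fintype V] [DecidableEq V] : Finset (V × V) :=
  Finset.univ.filter (fun e => e.1 ≠ e.2)

/-- Out-degree of `v` in edge set `E`. -/
def outDeg (E : Finset (V × V)) (v : V) : ℕ := (E.filter (fun e => e.1 = v)).card

/-- In-degree of `v` in edge set `E`. -/
def inDeg (E : Finset (V × V)) (v : V) : ℕ := (E.filter (fun e => e.2 = v)).card

/-- A frame for the edge `e = (u,v)`: a set `F ⊆ E \ {e}` consisting of an edge-simple
path from `u` to `v` together with zero or more edge-simple cycles, all pairwise
edge-disjoint. -/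
def IsFrame (E : Finset (V × V)) (e : V × V) (F : Finset (V × V)) : Prop :=
  F ⊆ E.erase e ∧
  ∃ (p : List V) (cs : List (List V)),
    p.head? = some e.1 ∧ p.getLast? = some e.2 ∧ (∀ a ∈ dSteps p, a ∈ E) ∧
    (∀ c ∈ cs, c ≠ [] ∧ ∀ a ∈ cycSteps c, a ∈ E) ∧
    (dSteps p ++ (cs.map cycSteps).flatten).Nodup ∧
    F = (dSteps p ++ (cs.map cycSteps).flatten).toFinset

/-- There exist two edge-disjoint directed (simple) paths from `u` to `v` in `E`. -/
def TwoEdgeDisjointPaths (E : Finset (V × V)) (u v : V) : Prop :=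
  ∃ p q : List V, p.Nodup ∧ q.Nodup ∧
    p.head? = some u ∧ p.getLast? = some v ∧
    q.head? = some u ∧ q.getLast? = some v ∧
    (∀ a ∈ dSteps p, a ∈ E) ∧ (∀ a ∈ dSteps q, a ∈ E) ∧
    (dSteps p).Disjoint (dSteps q)




/-! ### The Charikar–Goemans–Karloff graphs -/

/-- Vertex type housing the graph `G_{k,r}` (index `k = 0` is a dummy level). -/
def CGKV : ℕ → Type
  | 0 => PUnit
  | 1 => ℕ
  | k + 2 => (ℕ × CGKV (k + 1)) ⊕ Fin 2

instance CGKV.decEq : (k : ℕ) → DecidableEq (CGKV k)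
  | 0 => inferInstanceAs (DecidableEq PUnit)
  | 1 => inferInstanceAs (DecidableEq ℕ)
  | k + 2 =>
      letI : DecidableEq (CGKV (k + 1)) := CGKV.decEq (k + 1)
      inferInstanceAs (DecidableEq ((ℕ × CGKV (k + 1)) ⊕ Fin 2))

/-- The source of `G_{k,r}`. -/
def CGKsrc (r : ℕ) : (k : ℕ) → CGKV k
  | 0 => PUnit.unit
  | 1 => (0 : ℕ)
  | _ + 2 => Sum.inr 0

/-- The sink of `G_{k,r}`. -/
def CGKsnk (r : ℕ) : (k : ℕ) → CGKV k
  | 0 => PUnit.unit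
  | 1 => (r + 1 : ℕ)
  | _ + 2 => Sum.inr 1

/-- The node set of `G_{k,r}`. -/
def CGKVS (r : ℕ) : (k : ℕ) → Finset (CGKV k)
  | 0 => ∅
  | 1 => Finset.range (r + 2)
  | k + 2 =>
      ((Finset.range r) ×ˢ CGKVS r (k + 1)).image Sum.inl ∪ {Sum.inr 0, Sum.inr 1}

/-- The edge set of `G_{k,r}`: at level 1, two oppositely-directed paths of `r+1` edges
on the nodes `0, …, r+1`; at level `k+2`, the edges of the `r` copies of `G_{k+1,r}`
together with a path from the source `s` through the copies' sources to the sink `t`,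
and a path from `t` through the copies' sinks (in the opposite order) back to `s`. -/
def CGKE (r : ℕ) : (k : ℕ) → Finset (CGKV k × CGKV k)
  | 0 => ∅
  | 1 => (dSteps (List.range (r + 2))).toFinset ∪
         (dSteps (List.range (r + 2)).reverse).toFinset
  | k + 2 =>
      (Finset.range r).biUnion
        (fun j => (CGKE r (k + 1)).image (fun e => (Sum.inl (j, e.1), Sum.inl (j, e.2)))) ∪
      (dSteps (Sum.inr 0 ::
        ((List.range r).map (fun j => Sum.inl (j, CGKsrc r (k + 1)))) ++ [Sum.inr 1])).toFinset ∪
      (dSteps (Sum.inr 1 ::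
        (((List.range r).map (fun j => Sum.inl (j, CGKsnk r (k + 1)))).reverse) ++ [Sum.inr 0])).toFinset

/-- Edge weights of `G_{k,r}` (and of `L_{k,r}`): level-`ℓ` edges have weight `r^(ℓ-1)`. -/
def CGKw (r : ℕ) : (k : ℕ) → CGKV k × CGKV k → ℝ
  | 0, _ => 0
  | 1, _ => 1
  | k + 2, e =>
      match e with
      | (Sum.inl (j, u), Sum.inl (j', v)) =>
          if j = j' then CGKw r (k + 1) (u, v) else (r : ℝ) ^ (k + 1)
      | _ => (r : ℝ) ^ (k + 1)

/-- `v₁`: the successor of `s` on the forward path of `G_{k,r}`. -/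
def Lv1 (r : ℕ) : (k : ℕ) → CGKV k
  | 0 => PUnit.unit
  | 1 => (1 : ℕ)
  | k + 2 => Sum.inl (0, CGKsrc r (k + 1))

/-- `v₂`: the predecessor of `t` on the forward path of `G_{k,r}`. -/
def Lv2 (r : ℕ) : (k : ℕ) → CGKV k
  | 0 => PUnit.unit
  | 1 => (r : ℕ)
  | k + 2 => Sum.inl (r - 1, CGKsrc r (k + 1))

/-- `v₃`: the successor of `t` on the backward path of `G_{k,r}`. -/
def Lv3 (r : ℕ) : (k : ℕ) → CGKV k
  | 0 => PUnit.unit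
  | 1 => (r : ℕ)
  | k + 2 => Sum.inl (r - 1, CGKsnk r (k + 1))

/-- `v₄`: the predecessor of `s` on the backward path of `G_{k,r}`. -/
def Lv4 (r : ℕ) : (k : ℕ) → CGKV k
  | 0 => PUnit.unit
  | 1 => (1 : ℕ)
  | k + 2 => Sum.inl (0, CGKsnk r (k + 1))

/-- The node set `V_{k,r}` of `L_{k,r}`: the nodes of `G_{k,r}` minus the two terminals. -/
def LVS (r k : ℕ) : Finset (CGKV k) :=
  ((CGKVS r k).erase (CGKsrc r k)).erase (CGKsnk r k)

/-- The edge set `E_{k,r}` of `L_{k,r}`: the edges of `G_{k,r}` not incident to a terminal,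
plus the two new edges `(v₂,v₁)` and `(v₄,v₃)`. -/
def LE (r k : ℕ) : Finset (CGKV k × CGKV k) :=
  (CGKE r k).filter (fun e =>
    e.1 ≠ CGKsrc r k ∧ e.1 ≠ CGKsnk r k ∧ e.2 ≠ CGKsrc r k ∧ e.2 ≠ CGKsnk r k) ∪
  {(Lv2 r k, Lv1 r k), (Lv4 r k, Lv3 r k)}



/-! ### Undirected graphs -/

variable {V : Type*} [DecidableEq V]

/-- The (undirected) steps of a walk given by its list of vertices. -/
def uSteps (l : List V) : List (Sym2 V) := (l.zip l.tail).map (fun p => Sym2.mk p.1 p.2)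

/-- `l` is a walk from `u` to `v` in the undirected edge set `E`. -/
def IsUWalk (E : Finset (Sym2 V)) (u v : V) (l : List V) : Prop :=
  l.head? = some u ∧ l.getLast? = some v ∧ ∀ e ∈ uSteps l, e ∈ E

/-- Whether the undirected edge `e` crosses the cut `(S, S̄)`. -/
def uCrosses (S : Finset V) (e : Sym2 V) : Bool :=
  Sym2.lift ⟨fun a b => xor (decide (a ∈ S)) (decide (b ∈ S)),
    fun a b => Bool.xor_comm _ _⟩ e

/-- `x(δ(S))`. -/
def uCut (E : Finset (Sym2 V)) (x : ↥E → ℝ) (S : Finset V) : ℝ :=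
  ∑ e ∈ E.attach.filter (fun e => uCrosses S e.val), x e

/-- `d · x = ∑_e d_e x_e` over the undirected edge set `E`. -/
def uDot (E : Finset (Sym2 V)) (d : Sym2 V → ℝ) (x : ↥E → ℝ) : ℝ :=
  ∑ e ∈ E.attach, d e.val * x e

/-- The symmetric tour polytope of the undirected graph with node set `VS`, edges `E`. -/
def STpoly (VS : Finset V) (E : Finset (Sym2 V)) : Set (↥E → ℝ) :=
  {x | (∀ e, 0 ≤ x e ∧ x e ≤ 1) ∧
       (∀ S : Finset V, S ⊆ VS → S.Nonempty → S ≠ VS → 2 ≤ uCut E x S) ∧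
       (∀ v ∈ VS, uCut E x {v} = 2)}

/-- The symmetric path polytope of the undirected graph with node set `VS`, edges `E`,
and endpoints `s`, `t`. -/
def SPpoly (VS : Finset V) (E : Finset (Sym2 V)) (s t : V) : Set (↥E → ℝ) :=
  {x | (∀ e, 0 ≤ x e ∧ x e ≤ 1) ∧
       (∀ S : Finset V, S ⊆ VS → S.Nonempty → S ≠ VS →
          (((s ∈ S) ↔ (t ∈ S)) → 2 ≤ uCut E x S) ∧
          (¬((s ∈ S) ↔ (t ∈ S)) → 1 ≤ uCut E x S)) ∧
       (∀ v ∈ VS, v ≠ s → v ≠ t → uCut E x {v} = 2) ∧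
       uCut E x {s} = 1 ∧ uCut E x {t} = 1}

/-- Indicator vectors of Hamiltonian paths from `s` to `t` (on node set `VS`) among
edges `E`. -/
def uHamPathVecs (VS : Finset V) (E : Finset (Sym2 V)) (s t : V) : Set (↥E → ℝ) :=
  {x | ∃ p : List V, p.Nodup ∧ p.toFinset = VS ∧
        p.head? = some s ∧ p.getLast? = some t ∧
        (∀ e ∈ uSteps p, e ∈ E) ∧
        ∀ e : ↥E, x e = if e.val ∈ uSteps p then 1 else 0}

/-- Edge set of the complete undirected graph on all of `V` (no self-loops). -/
def uCompleteAll (V : Type*) [Fintype V] [DecidableEq V] : Finset (Sym2 V) :=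
  Finset.univ.filter (fun e => ¬ e.IsDiag)

/-- Shortest-path distance (number of edges) between the endpoints of `e`, in the
unweighted undirected graph with edge set `E`. -/
noncomputable def uDist (E : Finset (Sym2 V)) (e : Sym2 V) : ℝ :=
  sInf {c | ∃ u v : V, e = s(u, v) ∧
    ∃ l : List V, IsUWalk E u v l ∧ ((uSteps l).length : ℝ) = c}

/-! ### Cheung's graphs -/

/-- The node set `V_{ℓ,q}` of Cheung's graph `G_{ℓ,q}`: a top path and a bottom path of
`ℓ+1` nodes each, a left and a right clique of `3q+3` nodes each, and nodes `s`, `t`. -/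
inductive ChV (l q : ℕ) where
  | top : Fin (l + 1) → ChV l q
  | bot : Fin (l + 1) → ChV l q
  | left : Fin (3 * q + 3) → ChV l q
  | right : Fin (3 * q + 3) → ChV l q
  | vs : ChV l q
  | vt : ChV l q
deriving DecidableEq, Fintype

/-- The edges of the two paths of `G_{ℓ,q}`. -/
def ChEpaths (l q : ℕ) : Finset (Sym2 (ChV l q)) :=
  (Finset.univ : Finset (Fin l)).image
    (fun i => s(ChV.top i.castSucc, ChV.top i.succ)) ∪
  (Finset.univ : Finset (Fin l)).image
    (fun i => s(ChV.bot i.castSucc, ChV.bot i.succ))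

/-- The edges within the two cliques of `G_{ℓ,q}`. -/
def ChEcliques (l q : ℕ) : Finset (Sym2 (ChV l q)) :=
  ((Finset.univ : Finset (Fin (3 * q + 3) × Fin (3 * q + 3))).filter
      (fun p => p.1 ≠ p.2)).image (fun p => s(ChV.left p.1, ChV.left p.2)) ∪
  ((Finset.univ : Finset (Fin (3 * q + 3) × Fin (3 * q + 3))).filter
      (fun p => p.1 ≠ p.2)).image (fun p => s(ChV.right p.1, ChV.right p.2))

/-- The connection edges of `G_{ℓ,q}`: path endpoints to the cliques, `s` to the left
clique, and `t` to the right clique. -/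
def ChEconn (l q : ℕ) : Finset (Sym2 (ChV l q)) :=
  (Finset.univ : Finset (Fin (3 * q + 3))).image (fun i => s(ChV.top 0, ChV.left i)) ∪
  (Finset.univ : Finset (Fin (3 * q + 3))).image (fun i => s(ChV.bot 0, ChV.left i)) ∪
  (Finset.univ : Finset (Fin (3 * q + 3))).image
    (fun i => s(ChV.top (Fin.last l), ChV.right i)) ∪
  (Finset.univ : Finset (Fin (3 * q + 3))).image
    (fun i => s(ChV.bot (Fin.last l), ChV.right i)) ∪
  (Finset.univ : Finset (Fin (3 * q + 3))).image (fun i => s(ChV.vs, ChV.left i)) ∪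
  (Finset.univ : Finset (Fin (3 * q + 3))).image (fun i => s(ChV.vt, ChV.right i))

/-- The edge set `E_{ℓ,q}` of Cheung's graph `G_{ℓ,q}`. -/
def ChE (l q : ℕ) : Finset (Sym2 (ChV l q)) :=
  ChEpaths l q ∪ ChEcliques l q ∪ ChEconn l q

/-- The node set of `G'_{ℓ,q}`: `G_{ℓ,q}` plus `ℓ-1` new internal path nodes. -/
inductive ChV' (l q : ℕ) where
  | old : ChV l q → ChV' l q
  | mid : Fin (l - 1) → ChV' l q
deriving DecidableEq, Fintype

/-- The new `s`–`t` path of `G'_{ℓ,q}` (as a list of nodes; it has `ℓ` edges). -/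
def ChPathList (l q : ℕ) : List (ChV' l q) :=
  ChV'.old ChV.vs :: ((List.finRange (l - 1)).map ChV'.mid ++ [ChV'.old ChV.vt])

/-- The edge set `E'_{ℓ,q}` of `G'_{ℓ,q}`: the (old) edges of `G_{ℓ,q}` together with the
`ℓ` new edges of a path from `s` to `t` through `ℓ-1` new nodes. -/
def ChE' (l q : ℕ) : Finset (Sym2 (ChV' l q)) :=
  (ChE l q).image (Sym2.map ChV'.old) ∪ (uSteps (ChPathList l q)).toFinset

/-! The nodes of a path strictly between two of its edges form a set whose only boundary edges
are those two; an `s`–`t` walk through all nodes starts and ends outside it but must enter it, so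
it traverses the two edges an even, positive number of times in total, hence each exactly once if
each at most once. If this happened on both paths, for edges `i` of the top path and `i'` of the
bottom path, then the cut separating `s` from `t` whose only boundary edges are those two would be
crossed exactly twice, whereas an `s`–`t` walk crosses every `s`–`t` cut an odd number of times. -/

end TSPGap

theorem List.countP_eq_count_add_count {α : Type*} [DecidableEq α] {p : α → Bool} {a b : α}
    (hab : a ≠ b) {L : List α} (hp : ∀ x ∈ L, p x = true ↔ x = a ∨ x = b) :
    L.countP p = L.count a + L.count b := by
  induction L with
  | nil => simp
  | cons c L ih =>
    rw [List.countP_cons, List.count_cons, List.count_cons,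
      ih (fun x hx => hp x (List.mem_cons_of_mem _ hx))]
    have hc := hp c List.mem_cons_self
    by_cases hca : c = a <;> by_cases hcb : c = b <;> simp_all <;> omega

namespace TSPGap

theorem uSteps_cons_cons {V : Type*} (a b : V) (l : List V) :
    uSteps (a :: b :: l) = s(a, b) :: uSteps (b :: l) := rfl

variable {V : Type*} [DecidableEq V]

@[simp]
theorem uCrosses_mk_eq_true {S : Finset V} {a b : V} :
    uCrosses S s(a, b) = true ↔ ¬(a ∈ S ↔ b ∈ S) := by
  simp [uCrosses]

theorem odd_countP_uCrosses_uSteps_iff (S : Finset V) {W : List V} {u v : V}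
    (hu : W.head? = some u) (hv : W.getLast? = some v) :
    Odd ((uSteps W).countP (uCrosses S)) ↔ (u ∈ S ↔ v ∉ S) := by
  induction W generalizing u with
  | nil => simp at hu
  | cons a t ih =>
    obtain rfl : a = u := by simpa using hu
    cases t with
    | nil =>
      obtain rfl : a = v := by simpa using hv
      simp [uSteps]
    | cons b l =>
      rw [List.getLast?_cons_cons] at hv
      have := ih rfl hv
      rw [uSteps_cons_cons, List.countP_cons]
      by_cases ha : a ∈ S <;> by_cases hb : b ∈ S <;> simp_all [Nat.odd_add_one]

theorem mem_iff_of_countP_uCrosses_uSteps_eq_zero {S : Finset V} {a : V} {t : List V}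
    (h : (uSteps (a :: t)).countP (uCrosses S) = 0) :
    ∀ x ∈ a :: t, (x ∈ S ↔ a ∈ S) := by
  induction t generalizing a with
  | nil => simp
  | cons b l ih =>
    rw [uSteps_cons_cons, List.countP_cons] at h
    have hab : a ∈ S ↔ b ∈ S := by
      by_contra hab
      simp [hab] at h
    have hrest := ih (a := b) (by omega)
    intro x hx
    rcases List.mem_cons.1 hx with rfl | hx
    · rfl
    · exact (hrest x hx).trans hab.symm

theorem countP_uCrosses_uSteps_pos {S : Finset V} {W : List V} {x y : V}
    (hx : x ∈ W) (hy : y ∈ W) (hxS : x ∈ S) (hyS : y ∉ S) :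
    0 < (uSteps W).countP (uCrosses S) := by
  cases W with
  | nil => simp at hx
  | cons a t =>
    by_contra h
    have h0 := mem_iff_of_countP_uCrosses_uSteps_eq_zero (Nat.eq_zero_of_not_pos h)
    exact hyS ((h0 y hy).2 ((h0 x hx).1 hxS))

theorem countP_uCrosses_uSteps_eq {E : Finset (Sym2 V)} {S : Finset V} {W : List V}
    {e₁ e₂ : Sym2 V} (hW : ∀ e ∈ uSteps W, e ∈ E) (hne : e₁ ≠ e₂)
    (hcut : ∀ e ∈ E, uCrosses S e = true ↔ e = e₁ ∨ e = e₂) :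
    (uSteps W).countP (uCrosses S) = (uSteps W).count e₁ + (uSteps W).count e₂ :=
  List.countP_eq_count_add_count hne fun e he => hcut e (hW e he)

section Cheung

variable {l q : ℕ}

def pathEdge (path : Fin (l + 1) → ChV l q) (i : Fin l) : Sym2 (ChV l q) :=
  s(path i.castSucc, path i.succ)

def pathSegment (path : Fin (l + 1) → ChV l q) (i j : Fin l) : Finset (ChV l q) :=
  univ.filter fun v => ∃ m : Fin (l + 1), v = path m ∧ (i : ℕ) < m ∧ (m : ℕ) ≤ j

def rightSide (i i' : Fin l) : Finset (ChV l q) :=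
  univ.filter fun v => (∃ m : Fin (l + 1), v = .top m ∧ (i : ℕ) < m) ∨
    (∃ m : Fin (l + 1), v = .bot m ∧ (i' : ℕ) < m) ∨ (∃ a, v = .right a) ∨ v = .vt

theorem pathEdge_injective {path : Fin (l + 1) → ChV l q} (hpath : Function.Injective path) :
    Function.Injective (pathEdge path) := by
  intro i j h
  simp only [pathEdge, Sym2.eq_iff, hpath.eq_iff, Fin.ext_iff, Fin.val_castSucc,
    Fin.val_succ] at h
  omega

theorem uCrosses_pathSegment_iff {path : Fin (l + 1) → ChV l q}
    (hpath : path = ChV.top ∨ path = ChV.bot) {i j : Fin l} (hij : i < j) {e : Sym2 (ChV l q)}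
    (he : e ∈ ChE l q) :
    uCrosses (pathSegment path i j) e = true ↔ e = pathEdge path i ∨ e = pathEdge path j := by
  rw [Fin.lt_def] at hij
  have hj := j.isLt
  simp only [ChE, ChEpaths, ChEcliques, ChEconn, mem_union, mem_image, mem_filter, mem_univ,
    true_and] at he
  rcases hpath with rfl | rfl <;>
  rcases he with (((⟨c, rfl⟩ | ⟨c, rfl⟩) | (⟨⟨a, b⟩, -, rfl⟩ | ⟨⟨a, b⟩, -, rfl⟩)) |
    (((((⟨a, rfl⟩ | ⟨a, rfl⟩) | ⟨a, rfl⟩) | ⟨a, rfl⟩) | ⟨a, rfl⟩) | ⟨a, rfl⟩)) <;>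
  simp [pathSegment, pathEdge] <;>
    simp only [Fin.ext_iff, Fin.val_succ, Fin.val_castSucc] at * <;> omega

theorem uCrosses_rightSide_iff (i i' : Fin l) {e : Sym2 (ChV l q)} (he : e ∈ ChE l q) :
    uCrosses (rightSide i i') e = true ↔ e = pathEdge .top i ∨ e = pathEdge .bot i' := by
  have hi := i.isLt
  have hi' := i'.isLt
  simp only [ChE, ChEpaths, ChEcliques, ChEconn, mem_union, mem_image, mem_filter, mem_univ,
    true_and] at he
  rcases he with (((⟨c, rfl⟩ | ⟨c, rfl⟩) | (⟨⟨a, b⟩, -, rfl⟩ | ⟨⟨a, b⟩, -, rfl⟩)) |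
    (((((⟨a, rfl⟩ | ⟨a, rfl⟩) | ⟨a, rfl⟩) | ⟨a, rfl⟩) | ⟨a, rfl⟩) | ⟨a, rfl⟩)) <;>
  simp [rightSide, pathEdge] <;>
    simp only [Fin.ext_iff, Fin.val_succ, Fin.val_castSucc] at * <;> omega

theorem pathEdge_top_ne_pathEdge_bot (i i' : Fin l) :
    pathEdge (q := q) .top i ≠ pathEdge .bot i' := by
  simp [pathEdge]

theorem even_and_pos_count_add_count_pathEdge {path : Fin (l + 1) → ChV l q}
    (hpath : path = ChV.top ∨ path = ChV.bot) {W : List (ChV l q)}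
    (hW : IsUWalk (ChE l q) ChV.vs ChV.vt W) (hvisit : ∀ v, v ∈ W) {i j : Fin l} (hij : i ≠ j) :
    Even ((uSteps W).count (pathEdge path i) + (uSteps W).count (pathEdge path j)) ∧
      0 < (uSteps W).count (pathEdge path i) + (uSteps W).count (pathEdge path j) := by
  wlog hlt : i < j generalizing i j
  · rw [add_comm]
    exact this hij.symm (hij.lt_or_gt.resolve_left hlt)
  obtain ⟨hs, ht, hE⟩ := hW
  have hinj : Function.Injective path := by
    rcases hpath with rfl | rfl <;> intro a b h <;> injection h
  have hvs : ChV.vs ∉ pathSegment path i j := by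
    rcases hpath with rfl | rfl <;> simp [pathSegment]
  have hvt : ChV.vt ∉ pathSegment path i j := by
    rcases hpath with rfl | rfl <;> simp [pathSegment]
  have hin : path i.succ ∈ pathSegment path i j := by
    have := Fin.lt_def.1 hlt
    simp only [pathSegment, mem_filter, mem_univ, true_and]
    exact ⟨i.succ, rfl, by simp, by simp; omega⟩
  rw [← countP_uCrosses_uSteps_eq hE ((pathEdge_injective hinj).ne hij)
    (fun e he => uCrosses_pathSegment_iff hpath hlt he)]
  refine ⟨?_, countP_uCrosses_uSteps_pos (hvisit _) (hvisit _) hin hvs⟩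
  rw [← Nat.not_odd_iff_even, odd_countP_uCrosses_uSteps_iff _ hs ht]
  tauto

theorem count_pathEdge_eq_one {path : Fin (l + 1) → ChV l q}
    (hpath : path = ChV.top ∨ path = ChV.bot) {W : List (ChV l q)}
    (hW : IsUWalk (ChE l q) ChV.vs ChV.vt W) (hvisit : ∀ v, v ∈ W) {i j : Fin l} (hij : i ≠ j)
    (hi : (uSteps W).count (pathEdge path i) ≤ 1) (hj : (uSteps W).count (pathEdge path j) ≤ 1) :
    (uSteps W).count (pathEdge path i) = 1 := by
  obtain ⟨heven, hpos⟩ := even_and_pos_count_add_count_pathEdge hpath hW hvisit hij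
  rw [Nat.even_iff] at heven
  omega

end Cheung

theorem stmt15_general (l q : ℕ) (W : List (ChV l q))
    (hW : IsUWalk (ChE l q) ChV.vs ChV.vt W)
    (hvisit : ∀ v : ChV l q, v ∈ W) :
    ¬ ∃ i j i' j' : Fin l, i ≠ j ∧ i' ≠ j' ∧
      (uSteps W).count s(ChV.top i.castSucc, ChV.top i.succ) ≤ 1 ∧
      (uSteps W).count s(ChV.top j.castSucc, ChV.top j.succ) ≤ 1 ∧
      (uSteps W).count s(ChV.bot i'.castSucc, ChV.bot i'.succ) ≤ 1 ∧
      (uSteps W).count s(ChV.bot j'.castSucc, ChV.bot j'.succ) ≤ 1 := by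
  rintro ⟨i, j, i', j', hij, hij', hi, hj, hi', hj'⟩
  have htop := count_pathEdge_eq_one (Or.inl rfl) hW hvisit hij hi hj
  have hbot := count_pathEdge_eq_one (Or.inr rfl) hW hvisit hij' hi' hj'
  have hodd := odd_countP_uCrosses_uSteps_iff (rightSide i i') hW.1 hW.2.1
  rw [countP_uCrosses_uSteps_eq hW.2.2 (pathEdge_top_ne_pathEdge_bot i i')
    (fun e he => uCrosses_rightSide_iff i i' he), htop, hbot] at hodd
  simp [rightSide, Nat.odd_iff] at hodd

theorem stmt15 (l q : ℕ) (hl : 1 ≤ l) (W : List (ChV l q))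
    (hW : IsUWalk (ChE l q) ChV.vs ChV.vt W)
    (hvisit : ∀ v : ChV l q, v ∈ W) :
    ¬ ∃ i j i' j' : Fin l, i ≠ j ∧ i' ≠ j' ∧
      (uSteps W).count s(ChV.top i.castSucc, ChV.top i.succ) ≤ 1 ∧
      (uSteps W).count s(ChV.top j.castSucc, ChV.top j.succ) ≤ 1 ∧
      (uSteps W).count s(ChV.bot i'.castSucc, ChV.bot i'.succ) ≤ 1 ∧
      (uSteps W).count s(ChV.bot j'.castSucc, ChV.bot j'.succ) ≤ 1 :=
  stmt15_general l q W hW hvisit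

end TSPGap
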